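/- arXiv:1604.02119 — 3 statements merged into one kernel-verified Lean document; each statement's English description precedes it below -/
import Mathlib

section
/- For positive semidefinite ρ, σ on H and a density matrix τ on K, the sandwiched trace functional is invariant under tensoring: Q̃_α(ρ⊗τ‖σ⊗τ) = Q̃_α(ρ‖σ). -/
/-!
Diagonalise `σ = U diag(d) U*` and `τ = V diag(e) V*`. Then `σ ⊗ τ` is diagonalised by the unitary
`U ⊗ V` with eigenvalues `dᵢ eⱼ ≥ 0`, so powers factor: `(σ ⊗ τ)^γ = σ^γ ⊗ τ^γ`. The sandwiched
matrix therefore is `X ⊗ τ^γ τ τ^γ = X ⊗ τ^(1/α)` with `X = σ^γ ρ σ^γ`, its `α`-th power is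
`X^α ⊗ τ`, and the trace of that is `tr X^α · tr τ = tr X^α`.
-/

open scoped Matrix ComplexOrder Kronecker

/-- Matrix power via the functional calculus: for a Hermitian matrix `A`,
`mpow A r` is `U * diag (eigenvalues ^ r) * Uᴴ` (with the convention
`0 ^ r = 0` for `r ≠ 0`, i.e. powers are taken on the support). -/
noncomputable def mpow {m : Type*} [Fintype m] [DecidableEq m]
    (A : Matrix m m ℂ) (r : ℝ) : Matrix m m ℂ :=
  if hA : A.IsHermitian then
    (hA.eigenvectorUnitary : Matrix m m ℂ) *
      Matrix.diagonal (fun i => ((hA.eigenvalues i ^ r : ℝ) : ℂ)) *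
      (hA.eigenvectorUnitary : Matrix m m ℂ)ᴴ
  else 0

/-- The sandwiched trace functional `Q̃_α(ρ‖σ) = tr[(σ^γ ρ σ^γ)^α]`, with `γ = (1-α)/(2α)`. -/
noncomputable def Qt {m : Type*} [Fintype m] [DecidableEq m]
    (α : ℝ) (ρ σ : Matrix m m ℂ) : ℂ :=
  Matrix.trace (mpow (mpow σ ((1 - α) / (2 * α)) * ρ * mpow σ ((1 - α) / (2 * α))) α)

/-- `ρ` is a density matrix. -/
def IsDensity {m : Type*} [Fintype m] (ρ : Matrix m m ℂ) : Prop :=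
  ρ.PosSemidef ∧ ρ.trace = 1

open Matrix Unitary

section

variable {m p : Type*} [Fintype m] [DecidableEq m] [Fintype p] [DecidableEq p]

lemma kronecker_mem_unitaryGroup {R : Type*} [CommRing R] [StarRing R] {U : Matrix m m R}
    {V : Matrix p p R} (hU : U ∈ unitaryGroup m R) (hV : V ∈ unitaryGroup p R) :
    U ⊗ₖ V ∈ unitaryGroup (m × p) R := by
  rw [mem_unitaryGroup_iff, star_eq_conjTranspose] at *
  rw [conjTranspose_kronecker, ← mul_kronecker_mul, hU, hV, one_kronecker_one]

lemma mul_diagonal_mul_conjTranspose_kronecker {R : Type*} [CommSemiring R] [StarRing R]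
    (U : Matrix m m R) (V : Matrix p p R) (a : m → R) (b : p → R) :
    (U * diagonal a * Uᴴ) ⊗ₖ (V * diagonal b * Vᴴ) =
      (U ⊗ₖ V) * diagonal (fun q => a q.1 * b q.2) * (U ⊗ₖ V)ᴴ := by
  rw [mul_kronecker_mul, mul_kronecker_mul, diagonal_kronecker_diagonal, conjTranspose_kronecker]

noncomputable def diagonalEvalStarAlgHom {s : Set ℝ} (d : m → s) :
    C(s, ℝ) →⋆ₐ[ℝ] Matrix m m ℂ where
  toFun g := diagonal fun i => (g (d i) : ℂ)
  map_one' := by simp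
  map_mul' f g := by simp [diagonal_mul_diagonal]
  map_zero' := by simp
  map_add' f g := by simp [diagonal_add]
  commutes' r := by ext i j; simp [diagonal_apply, algebraMap_matrix_apply]
  map_star' g := by simp [star_eq_conjTranspose, diagonal_conjTranspose]

lemma cfc_unitary_conj_diagonal (U : unitaryGroup m ℂ) (d : m → ℝ) (f : ℝ → ℝ) :
    cfc f ((U : Matrix m m ℂ) * diagonal (fun i => (d i : ℂ)) * (U : Matrix m m ℂ)ᴴ) =
      U * diagonal (fun i => (f (d i) : ℂ)) * (U : Matrix m m ℂ)ᴴ := by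
  set A := (U : Matrix m m ℂ) * diagonal (fun i => (d i : ℂ)) * (U : Matrix m m ℂ)ᴴ
  have hA : IsSelfAdjoint A := by
    refine isHermitian_mul_mul_conjTranspose _ (isHermitian_diagonal_iff.mpr fun i => ?_)
    simp [IsSelfAdjoint]
  have hd : ∀ i, d i ∈ spectrum ℝ A := by
    intro i
    rw [show A = U * diagonal (fun i => (d i : ℂ)) * star (U : Matrix m m ℂ) from rfl,
      spectrum_star_right_conjugate, ← spectrum.algebraMap_mem_iff ℂ, spectrum_diagonal]
    exact ⟨i, rfl⟩
  -- By uniqueness of the functional calculus, any continuous ⋆-homomorphism out of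
  -- `C(spectrum ℝ A, ℝ)` that sends the identity to `A` is `cfcHom`.
  let φ := (conjStarAlgAut ℝ _ U : Matrix m m ℂ →⋆ₐ[ℝ] Matrix m m ℂ).comp
    (diagonalEvalStarAlgHom fun i => (⟨d i, hd i⟩ : spectrum ℝ A))
  have hφ_id : φ (.restrict (spectrum ℝ A) (.id ℝ)) = A := rfl
  have hφ_cont : Continuous φ := by
    show Continuous fun g : C(spectrum ℝ A, ℝ) =>
      (U : Matrix m m ℂ) * diagonal (fun i => (g ⟨d i, hd i⟩ : ℂ)) * (star U : unitaryGroup m ℂ)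
    fun_prop
  rw [cfc_apply f A hA (A.finite_real_spectrum.continuousOn f),
    cfcHom_eq_of_continuous_of_map_id hA φ hφ_cont hφ_id]
  rfl

lemma Matrix.PosSemidef.nonneg_of_mem_spectrum {A : Matrix m m ℂ} (hA : A.PosSemidef) {x : ℝ}
    (hx : x ∈ spectrum ℝ A) : 0 ≤ x := by
  obtain ⟨i, rfl⟩ := hA.1.spectrum_real_eq_range_eigenvalues ▸ hx
  exact hA.eigenvalues_nonneg i

lemma mpow_eq_cfc {A : Matrix m m ℂ} (hA : A.IsHermitian) (r : ℝ) :
    mpow A r = cfc (fun x : ℝ => x ^ r) A := by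
  rw [mpow, dif_pos hA, hA.cfc_eq, IsHermitian.cfc, conjStarAlgAut_apply, star_eq_conjTranspose]
  rfl

lemma posSemidef_mpow {A : Matrix m m ℂ} (hA : A.PosSemidef) (r : ℝ) :
    (mpow A r).PosSemidef := by
  open scoped MatrixOrder in
  rw [mpow_eq_cfc hA.1, ← nonneg_iff_posSemidef]
  exact cfc_nonneg fun x hx => Real.rpow_nonneg (hA.nonneg_of_mem_spectrum hx) r

lemma mpow_one {A : Matrix m m ℂ} (hA : A.IsHermitian) : mpow A 1 = A := by
  simp [mpow_eq_cfc hA, cfc_id' ℝ A hA.isSelfAdjoint]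

lemma mpow_mpow {A : Matrix m m ℂ} (hA : A.PosSemidef) (r s : ℝ) :
    mpow (mpow A r) s = mpow A (r * s) := by
  rw [mpow_eq_cfc (posSemidef_mpow hA r).1, mpow_eq_cfc hA.1, mpow_eq_cfc hA.1,
    ← cfc_comp _ _ A hA.1.isSelfAdjoint (hf := A.finite_real_spectrum.continuousOn _)
      (hg := (A.finite_real_spectrum.image _).continuousOn _)]
  exact cfc_congr fun x hx => (Real.rpow_mul (hA.nonneg_of_mem_spectrum hx) r s).symm

-- `2 * r + 1 ≠ 0` is needed at the eigenvalue `0`, where `0 ^ r * 0 * 0 ^ r = 0` but `0 ^ 0 = 1`.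
lemma mpow_mul_mul_mpow {A : Matrix m m ℂ} (hA : A.PosSemidef) {r : ℝ} (hr : 2 * r + 1 ≠ 0) :
    mpow A r * A * mpow A r = mpow A (2 * r + 1) := by
  have hf : ∀ f : ℝ → ℝ, ContinuousOn f (spectrum ℝ A) := A.finite_real_spectrum.continuousOn
  nth_rw 2 [← cfc_id' ℝ A hA.1.isSelfAdjoint]
  rw [mpow_eq_cfc hA.1, mpow_eq_cfc hA.1, ← cfc_mul _ _ A (hf _) (hf _),
    ← cfc_mul _ _ A (hf _) (hf _)]
  refine cfc_congr fun x hx => ?_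
  rcases (hA.nonneg_of_mem_spectrum hx).eq_or_lt with rfl | hx
  · simp [Real.zero_rpow hr]
  · rw [two_mul, Real.rpow_add hx, Real.rpow_add hx, Real.rpow_one]; ring

lemma mpow_kronecker {A : Matrix m m ℂ} {B : Matrix p p ℂ} (hA : A.PosSemidef)
    (hB : B.PosSemidef) (r : ℝ) : mpow (A ⊗ₖ B) r = mpow A r ⊗ₖ mpow B r := by
  let W : unitaryGroup (m × p) ℂ :=
    ⟨_, kronecker_mem_unitaryGroup hA.1.eigenvectorUnitary.2 hB.1.eigenvectorUnitary.2⟩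
  have hAB : A ⊗ₖ B = (W : Matrix (m × p) (m × p) ℂ) *
      diagonal (fun q => ((hA.1.eigenvalues q.1 * hB.1.eigenvalues q.2 : ℝ) : ℂ)) *
      (W : Matrix (m × p) (m × p) ℂ)ᴴ := by
    conv_lhs => rw [hA.1.spectral_theorem, hB.1.spectral_theorem]
    simp only [conjStarAlgAut_apply, star_eq_conjTranspose, W]
    rw [mul_diagonal_mul_conjTranspose_kronecker]
    push_cast
    rfl
  rw [mpow_eq_cfc (hA.kronecker hB).1, hAB, cfc_unitary_conj_diagonal, mpow, mpow, dif_pos hA.1,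
    dif_pos hB.1, mul_diagonal_mul_conjTranspose_kronecker]
  refine congrArg (_ * · * _) (congrArg diagonal (funext fun q => ?_))
  rw [Real.mul_rpow (hA.eigenvalues_nonneg q.1) (hB.eigenvalues_nonneg q.2)]
  push_cast
  rfl

end

theorem Qt_tensor_invariance_general {n k : ℕ}
    (α : ℝ) (hα0 : 0 < α)
    (ρ σ : Matrix (Fin n) (Fin n) ℂ) (hρ : ρ.PosSemidef) (hσ : σ.PosSemidef)
    (τ : Matrix (Fin k) (Fin k) ℂ) (hτ : IsDensity τ) :
    Qt α (ρ ⊗ₖ τ) (σ ⊗ₖ τ) = Qt α ρ σ := by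
  obtain ⟨hτ, hτ_trace⟩ := hτ
  set γ := (1 - α) / (2 * α)
  have hγ : 2 * γ + 1 = α⁻¹ := by simp only [γ]; field_simp; ring
  have hX : (mpow σ γ * ρ * mpow σ γ).PosSemidef := by
    simpa [(posSemidef_mpow hσ γ).1.eq] using hρ.mul_mul_conjTranspose_same (mpow σ γ)
  have hτ_sandwich : mpow τ γ * τ * mpow τ γ = mpow τ α⁻¹ := by
    rw [mpow_mul_mul_mpow hτ (by rw [hγ]; positivity), hγ]
  rw [Qt, Qt, mpow_kronecker hσ hτ, ← mul_kronecker_mul, ← mul_kronecker_mul, hτ_sandwich,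
    mpow_kronecker hX (posSemidef_mpow hτ _), mpow_mpow hτ, inv_mul_cancel₀ hα0.ne', mpow_one hτ.1,
    trace_kronecker, hτ_trace, mul_one]

/-- Invariance of the sandwiched trace functional under tensoring with a fixed state. -/
theorem Qt_tensor_invariance {n k : ℕ}
    (α : ℝ) (hα0 : 0 < α) (hα1 : α ≠ 1)
    (ρ σ : Matrix (Fin n) (Fin n) ℂ) (hρ : ρ.PosSemidef) (hσ : σ.PosSemidef)
    (τ : Matrix (Fin k) (Fin k) ℂ) (hτ : IsDensity τ) :
    Qt α (ρ ⊗ₖ τ) (σ ⊗ₖ τ) = Qt α ρ σ :=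
  Qt_tensor_invariance_general α hα0 ρ σ hρ hσ τ hτ
end

section
/- Let g : D → ℝ be continuous and strictly convex on an interval D ⊆ ℝ. Then A ↦ tr g(A) is strictly convex on the set of Hermitian matrices with spectrum contained in D. -/
/-!
Let `U` be a unitary diagonalising `C = l A + (1 - l) B` and let `a_i`, `b_i` be the diagonal
entries of `U⋆ A U` and `U⋆ B U`, so that the eigenvalues of `C` are `l a_i + (1 - l) b_i`.
The vector `a` is the image of the spectrum of `A` under the doubly stochastic matrix
`(|⟪u_i, v_j⟫|²)`, so Jensen's inequality gives `∑ g(a_i) ≤ tr g(A)` (Peierls), with equality for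
strictly convex `g` only if `U⋆ A U` is diagonal. Hence
`tr g(C) ≤ l ∑ g(a_i) + (1 - l) ∑ g(b_i) ≤ l tr g(A) + (1 - l) tr g(B)`, and equality throughout
forces `a = b` with `U⋆ A U` and `U⋆ B U` diagonal, that is `A = B`.
-/

open scoped Matrix ComplexOrder

/-- `tr g(A)` for a Hermitian matrix `A`, defined via the functional calculus
(i.e. as the sum of `g` applied to the eigenvalues of `A`). -/
noncomputable def trCfc {m : Type*} [Fintype m] [DecidableEq m]
    (g : ℝ → ℝ) (A : Matrix m m ℂ) : ℝ :=
  if hA : A.IsHermitian then ∑ i, g (hA.eigenvalues i) else 0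

open Matrix

namespace Matrix

variable {n : Type*} [Fintype n] [DecidableEq n]

section Stochastic

lemma mem_rowStochastic_of_mem_doublyStochastic {R : Type*} [Semiring R] [PartialOrder R]
    [IsOrderedRing R] {M : Matrix n n R} (hM : M ∈ doublyStochastic R n) : M ∈ rowStochastic R n :=
  (mem_doublyStochastic_iff_mem_rowStochastic_and_mem_colStochastic.mp hM).1

variable {D : Set ℝ} {g : ℝ → ℝ} {M : Matrix n n ℝ} {α : n → ℝ}

lemma mulVec_apply_mem_of_mem_rowStochastic (hD : Convex ℝ D) (hM : M ∈ rowStochastic ℝ n)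
    (hα : ∀ j, α j ∈ D) (i : n) : (M *ᵥ α) i ∈ D := by
  simpa [mulVec, dotProduct] using hD.sum_mem (fun j _ ↦ nonneg_of_mem_rowStochastic hM)
    (sum_row_of_mem_rowStochastic hM i) fun j _ ↦ hα j

lemma _root_.ConvexOn.map_mulVec_apply_le (hg : ConvexOn ℝ D g) (hM : M ∈ rowStochastic ℝ n)
    (hα : ∀ j, α j ∈ D) (i : n) : g ((M *ᵥ α) i) ≤ (M *ᵥ (g ∘ α)) i := by
  simpa [mulVec, dotProduct] using hg.map_sum_le (fun j _ ↦ nonneg_of_mem_rowStochastic hM)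
    (sum_row_of_mem_rowStochastic hM i) fun j _ ↦ hα j

lemma _root_.ConvexOn.sum_map_mulVec_le (hg : ConvexOn ℝ D g) (hM : M ∈ doublyStochastic ℝ n)
    (hα : ∀ j, α j ∈ D) : ∑ i, g ((M *ᵥ α) i) ≤ ∑ i, g (α i) :=
  calc ∑ i, g ((M *ᵥ α) i)
      ≤ ∑ i, (M *ᵥ (g ∘ α)) i := Finset.sum_le_sum fun i _ ↦
        hg.map_mulVec_apply_le (mem_rowStochastic_of_mem_doublyStochastic hM) hα i
    _ = ∑ i, g (α i) := sum_mulVec_of_mem_doublyStochastic hM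

lemma _root_.StrictConvexOn.eq_mulVec_apply_of_sum_map_mulVec_eq (hg : StrictConvexOn ℝ D g)
    (hM : M ∈ doublyStochastic ℝ n) (hα : ∀ j, α j ∈ D)
    (heq : ∑ i, g ((M *ᵥ α) i) = ∑ i, g (α i)) {i j : n} (hij : M i j ≠ 0) :
    α j = (M *ᵥ α) i := by
  have hrow := mem_rowStochastic_of_mem_doublyStochastic hM
  have hsum : ∑ i, g ((M *ᵥ α) i) = ∑ i, (M *ᵥ (g ∘ α)) i :=
    heq.trans (sum_mulVec_of_mem_doublyStochastic hM).symm
  have hi : g ((M *ᵥ α) i) = (M *ᵥ (g ∘ α)) i :=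
    (Finset.sum_eq_sum_iff_of_le fun i _ ↦ hg.convexOn.map_mulVec_apply_le hrow hα i).mp hsum i
      (Finset.mem_univ i)
  simp only [mulVec, dotProduct, Function.comp_apply, ← smul_eq_mul] at hi ⊢
  exact (hg.map_sum_eq_iff' (fun j _ ↦ nonneg_of_mem_rowStochastic hrow)
    (sum_row_of_mem_rowStochastic hrow i) fun j _ ↦ hα j).mp hi j (Finset.mem_univ j) hij

end Stochastic

section Unitary

variable {W : Matrix n n ℂ}

lemma map_normSq_mem_doublyStochastic (hW : W ∈ unitaryGroup n ℂ) :
    W.map Complex.normSq ∈ doublyStochastic ℝ n := by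
  refine mem_doublyStochastic_iff_sum.mpr
    ⟨fun i j ↦ Complex.normSq_nonneg _, fun i ↦ ?_, fun j ↦ ?_⟩
  · have h := congr_fun₂ (mem_unitaryGroup_iff.mp hW) i i
    simp only [mul_apply, star_apply, RCLike.star_def, Complex.mul_conj, one_apply_eq] at h
    exact_mod_cast h
  · have h := congr_fun₂ (mem_unitaryGroup_iff'.mp hW) j j
    simp only [mul_apply, star_apply, RCLike.star_def, mul_comm (starRingEnd ℂ _),
      Complex.mul_conj, one_apply_eq] at h
    exact_mod_cast h

lemma mul_diagonal_mul_star_apply_self (α : n → ℝ) (i : n) :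
    (W * diagonal (fun j ↦ (α j : ℂ)) * star W) i i = ((W.map Complex.normSq *ᵥ α) i : ℂ) := by
  rw [mul_apply]
  simp only [mul_diagonal, star_apply, RCLike.star_def, mulVec, dotProduct, map_apply]
  push_cast
  refine Finset.sum_congr rfl fun j _ ↦ ?_
  rw [← Complex.mul_conj]
  ring

lemma mul_diagonal_mul_star_eq_diagonal (hW : W ∈ unitaryGroup n ℂ) {α c : n → ℂ}
    (h : ∀ i j, W i j ≠ 0 → α j = c i) : W * diagonal α * star W = diagonal c := by
  have hcomm : W * diagonal α = diagonal c * W := by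
    ext i j
    by_cases hij : W i j = 0
    · simp [hij]
    · simp [h i j hij, mul_comm]
  rw [hcomm, Matrix.mul_assoc, mem_unitaryGroup_iff.mp hW, Matrix.mul_one]

end Unitary

/-- `⟪u_i, A u_i⟫` for the columns `u_i` of `U`; it is real when `A` is Hermitian. -/
def conjDiagRe (U A : Matrix n n ℂ) (i : n) : ℝ :=
  ((star U * A * U) i i).re

lemma conjDiagRe_smul_add_smul (U A B : Matrix n n ℂ) (s t : ℝ) (i : n) :
    conjDiagRe U (s • A + t • B) i = s * conjDiagRe U A i + t * conjDiagRe U B i := by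
  simp [conjDiagRe, Matrix.mul_add, Matrix.add_mul]

namespace IsHermitian

variable {A U : Matrix n n ℂ} (hA : A.IsHermitian)

lemma trCfc_eq (g : ℝ → ℝ) : trCfc g A = ∑ i, g (hA.eigenvalues i) := dif_pos hA

lemma conjDiagRe_eigenvectorUnitary : conjDiagRe hA.eigenvectorUnitary A = hA.eigenvalues := by
  ext i
  have h := congr_fun₂ hA.conjStarAlgAut_star_eigenvectorUnitary i i
  rw [Unitary.conjStarAlgAut_star_apply, diagonal_apply_eq] at h
  simp [conjDiagRe, h]

/-- The weights `|⟪u_i, v_j⟫|²` between the columns `u_i` of `U` and the eigenvectors `v_j`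
of `A`. -/
noncomputable def overlap (U : Matrix n n ℂ) : Matrix n n ℝ :=
  (star U * hA.eigenvectorUnitary).map Complex.normSq

lemma overlap_mem_doublyStochastic (hU : U ∈ unitaryGroup n ℂ) :
    hA.overlap U ∈ doublyStochastic ℝ n :=
  map_normSq_mem_doublyStochastic (mul_mem (Unitary.star_mem hU) hA.eigenvectorUnitary.2)

lemma star_mul_mul_eq :
    star U * A * U = (star U * hA.eigenvectorUnitary) * diagonal (fun j ↦ (hA.eigenvalues j : ℂ)) *
      star (star U * hA.eigenvectorUnitary) := by
  conv_lhs => rw [hA.spectral_theorem, Unitary.conjStarAlgAut_apply]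
  simp only [star_mul, star_star, Matrix.mul_assoc]
  rfl

lemma conjDiagRe_eq_overlap_mulVec :
    conjDiagRe U A = hA.overlap U *ᵥ hA.eigenvalues := by
  ext i
  rw [conjDiagRe, hA.star_mul_mul_eq, mul_diagonal_mul_star_apply_self, Complex.ofReal_re, overlap]

lemma star_mul_mul_eq_diagonal (hU : U ∈ unitaryGroup n ℂ)
    (h : ∀ i j, hA.overlap U i j ≠ 0 → hA.eigenvalues j = (hA.overlap U *ᵥ hA.eigenvalues) i) :
    star U * A * U = diagonal (fun i ↦ (conjDiagRe U A i : ℂ)) := by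
  rw [hA.conjDiagRe_eq_overlap_mulVec, hA.star_mul_mul_eq]
  refine mul_diagonal_mul_star_eq_diagonal (mul_mem (Unitary.star_mem hU)
    hA.eigenvectorUnitary.2) fun i j hij ↦ ?_
  rw [h i j (by simpa [overlap] using hij)]

variable {D : Set ℝ} {g : ℝ → ℝ} (hspec : ∀ i, hA.eigenvalues i ∈ D) (hU : U ∈ unitaryGroup n ℂ)
include hspec hU

lemma conjDiagRe_mem (hD : Convex ℝ D) (i : n) : conjDiagRe U A i ∈ D := by
  rw [hA.conjDiagRe_eq_overlap_mulVec]
  exact mulVec_apply_mem_of_mem_rowStochastic hD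
    (mem_rowStochastic_of_mem_doublyStochastic (hA.overlap_mem_doublyStochastic hU)) hspec i

lemma sum_map_conjDiagRe_le_trCfc (hg : ConvexOn ℝ D g) :
    ∑ i, g (conjDiagRe U A i) ≤ trCfc g A := by
  rw [hA.conjDiagRe_eq_overlap_mulVec, hA.trCfc_eq]
  exact hg.sum_map_mulVec_le (hA.overlap_mem_doublyStochastic hU) hspec

lemma sum_map_conjDiagRe_lt_trCfc (hg : StrictConvexOn ℝ D g)
    (hdiag : star U * A * U ≠ diagonal (fun i ↦ (conjDiagRe U A i : ℂ))) :
    ∑ i, g (conjDiagRe U A i) < trCfc g A := by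
  refine (hA.sum_map_conjDiagRe_le_trCfc hspec hU hg.convexOn).lt_of_ne fun heq ↦ hdiag ?_
  rw [hA.conjDiagRe_eq_overlap_mulVec, hA.trCfc_eq] at heq
  exact hA.star_mul_mul_eq_diagonal hU fun i j hij ↦
    hg.eq_mulVec_apply_of_sum_map_mulVec_eq (hA.overlap_mem_doublyStochastic hU) hspec heq hij

end IsHermitian

end Matrix

lemma sum_map_conjDiagRe_convexComb_lt_trCfc {n : Type*} [Fintype n] [DecidableEq n] {D : Set ℝ}
    (hD : Convex ℝ D) {g : ℝ → ℝ} (hg : StrictConvexOn ℝ D g) {A B U : Matrix n n ℂ}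
    (hA : A.IsHermitian) (hB : B.IsHermitian) (hspecA : ∀ i, hA.eigenvalues i ∈ D)
    (hspecB : ∀ i, hB.eigenvalues i ∈ D) (hAB : A ≠ B) (hU : U ∈ unitaryGroup n ℂ) {l : ℝ}
    (hl0 : 0 < l) (hl1 : l < 1) :
    ∑ i, g (l * conjDiagRe U A i + (1 - l) * conjDiagRe U B i)
      < l * trCfc g A + (1 - l) * trCfc g B := by
  have hl1' : 0 < 1 - l := sub_pos.mpr hl1
  set a := conjDiagRe U A
  set b := conjDiagRe U B
  have haD := hA.conjDiagRe_mem hspecA hU hD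
  have hbD := hB.conjDiagRe_mem hspecB hU hD
  have hpoint : ∀ i, g (l * a i + (1 - l) * b i) ≤ l * g (a i) + (1 - l) * g (b i) := fun i ↦
    hg.convexOn.2 (haD i) (hbD i) hl0.le hl1'.le (by ring)
  have hsplit : ∑ i, (l * g (a i) + (1 - l) * g (b i)) =
      l * ∑ i, g (a i) + (1 - l) * ∑ i, g (b i) := by
    rw [Finset.sum_add_distrib, Finset.mul_sum, Finset.mul_sum]
  have hleA := hA.sum_map_conjDiagRe_le_trCfc hspecA hU hg.convexOn
  have hleB := hB.sum_map_conjDiagRe_le_trCfc hspecB hU hg.convexOn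
  by_cases hab : a = b
  · have hdiag : star U * A * U ≠ diagonal (fun i ↦ (a i : ℂ)) ∨
        star U * B * U ≠ diagonal (fun i ↦ (b i : ℂ)) := by
      by_contra! h
      refine hAB (EquivLike.injective (Unitary.conjStarAlgAut ℂ _ (star ⟨U, hU⟩)) ?_)
      rw [Unitary.conjStarAlgAut_star_apply, Unitary.conjStarAlgAut_star_apply, h.1, h.2, hab]
    calc ∑ i, g (l * a i + (1 - l) * b i) ≤ ∑ i, (l * g (a i) + (1 - l) * g (b i)) :=
          Finset.sum_le_sum fun i _ ↦ hpoint i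
      _ = l * ∑ i, g (a i) + (1 - l) * ∑ i, g (b i) := hsplit
      _ < l * trCfc g A + (1 - l) * trCfc g B := by
        rcases hdiag with h | h
        · exact add_lt_add_of_lt_of_le
            (mul_lt_mul_of_pos_left (hA.sum_map_conjDiagRe_lt_trCfc hspecA hU hg h) hl0)
            (mul_le_mul_of_nonneg_left hleB hl1'.le)
        · exact add_lt_add_of_le_of_lt (mul_le_mul_of_nonneg_left hleA hl0.le)
            (mul_lt_mul_of_pos_left (hB.sum_map_conjDiagRe_lt_trCfc hspecB hU hg h) hl1')
  · obtain ⟨i, hi⟩ := Function.ne_iff.mp hab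
    calc ∑ i, g (l * a i + (1 - l) * b i) < ∑ i, (l * g (a i) + (1 - l) * g (b i)) :=
          Finset.sum_lt_sum (fun i _ ↦ hpoint i) ⟨i, Finset.mem_univ i,
            hg.2 (haD i) (hbD i) hi hl0 hl1' (by ring)⟩
      _ = l * ∑ i, g (a i) + (1 - l) * ∑ i, g (b i) := hsplit
      _ ≤ l * trCfc g A + (1 - l) * trCfc g B :=
        add_le_add (mul_le_mul_of_nonneg_left hleA hl0.le) (mul_le_mul_of_nonneg_left hleB hl1'.le)

theorem trCfc_strictConvex_general {n : ℕ}
    (D : Set ℝ) (hD : Convex ℝ D)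
    (g : ℝ → ℝ) (hg : StrictConvexOn ℝ D g)
    (A B : Matrix (Fin n) (Fin n) ℂ)
    (hA : A.IsHermitian) (hB : B.IsHermitian)
    (hspecA : ∀ i, hA.eigenvalues i ∈ D) (hspecB : ∀ i, hB.eigenvalues i ∈ D)
    (hAB : A ≠ B) (l : ℝ) (hl0 : 0 < l) (hl1 : l < 1) :
    trCfc g (l • A + (1 - l) • B)
      < l * trCfc g A + (1 - l) * trCfc g B := by
  have hC : (l • A + (1 - l) • B).IsHermitian :=
    (hA.smul (.all l)).add (hB.smul (.all (1 - l)))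
  have hμ : ∀ i, hC.eigenvalues i =
      l * conjDiagRe hC.eigenvectorUnitary A i + (1 - l) * conjDiagRe hC.eigenvectorUnitary B i :=
    fun i ↦ by rw [← conjDiagRe_smul_add_smul, hC.conjDiagRe_eigenvectorUnitary]
  rw [hC.trCfc_eq]
  simp only [hμ]
  exact sum_map_conjDiagRe_convexComb_lt_trCfc hD hg hA hB hspecA hspecB hAB
    hC.eigenvectorUnitary.2 hl0 hl1

/-- If `g` is continuous and strictly convex on an interval `D`, then `A ↦ tr g(A)`
is strictly convex on Hermitian matrices with spectrum contained in `D`. -/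
theorem trCfc_strictConvex {n : ℕ}
    (D : Set ℝ) (hD : Convex ℝ D)
    (g : ℝ → ℝ) (hgc : ContinuousOn g D) (hg : StrictConvexOn ℝ D g)
    (A B : Matrix (Fin n) (Fin n) ℂ)
    (hA : A.IsHermitian) (hB : B.IsHermitian)
    (hspecA : ∀ i, hA.eigenvalues i ∈ D) (hspecB : ∀ i, hB.eigenvalues i ∈ D)
    (hAB : A ≠ B) (l : ℝ) (hl0 : 0 < l) (hl1 : l < 1) :
    trCfc g (l • A + (1 - l) • B)
      < l * trCfc g A + (1 - l) * trCfc g B :=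
  trCfc_strictConvex_general D hD g hg A B hA hB hspecA hspecB hAB l hl0 hl1
end

section
/- For a fixed positive definite σ and density matrix ρ, and α > 1, the function H ↦ f_α(H, ρ, σ) := α tr(ρH) − (α−1) tr[(σ^{−γ} H σ^{−γ})^{α/(α−1)}] on positive semidefinite H is strictly concave, where γ = (1−α)/(2α). -/
open scoped Matrix ComplexOrder Kronecker

/-- The variational functional
`f_α(H,ρ,σ) = α tr(ρH) − (α−1) tr[(σ^{−γ} H σ^{−γ})^{α/(α−1)}]`, `γ = (1−α)/(2α)`. -/
noncomputable def fAlpha {m : Type*} [Fintype m] [DecidableEq m]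
    (α : ℝ) (H ρ σ : Matrix m m ℂ) : ℝ :=
  α * (Matrix.trace (ρ * H)).re
    - (α - 1) * (Matrix.trace (mpow
        (mpow σ (-((1 - α) / (2 * α))) * H * mpow σ (-((1 - α) / (2 * α))))
        (α / (α - 1)))).re

/-!
Put `M = σ^{-γ}`, which is Hermitian and invertible. The map `H ↦ M H M` is linear, injective
and preserves positive semidefiniteness, and `H ↦ tr(ρH)` is linear, so it suffices that
`X ↦ tr X^p` is strictly convex on positive semidefinite matrices for `p = α/(α-1) > 1`.

Diagonalize `C = aA + bB` by a unitary `U`, and let `x`, `y` be the diagonals of `U*AU`, `U*BU`,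
so that the eigenvalues of `C` are `a xᵢ + b yᵢ`. Convexity of `t ↦ t^p` gives
`Σ (a xᵢ + b yᵢ)^p ≤ a Σ xᵢ^p + b Σ yᵢ^p`. The diagonal of `U*AU = W diag(λ) W*` is the average
of the eigenvalues `λ` against the doubly stochastic matrix `|Wᵢⱼ|²`, so Jensen gives
`Σ xᵢ^p ≤ tr A^p` (Peierls), strictly unless `U*AU` is diagonal. As `A ≠ B`, either `x ≠ y` or
one of `U*AU`, `U*BU` has a nonzero off-diagonal entry, and one of the inequalities is strict.
-/

open Finset

namespace Matrix

section

variable {m : Type*} {A B : Matrix m m ℂ}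

lemma exists_apply_ne_zero_or_re_apply_self_ne (hA : A.IsHermitian) (hB : B.IsHermitian)
    (hAB : A ≠ B) : (∃ i k, i ≠ k ∧ A i k ≠ 0) ∨ (∃ i k, i ≠ k ∧ B i k ≠ 0) ∨
      ∃ i, (A i i).re ≠ (B i i).re := by
  by_contra! h
  obtain ⟨hA0, hB0, hdiag⟩ := h
  refine hAB (ext fun i k => ?_)
  rcases eq_or_ne i k with rfl | hik
  · rw [← hA.coe_re_apply_self i, ← hB.coe_re_apply_self i]
    exact congrArg _ (hdiag i)
  · rw [hA0 i k hik, hB0 i k hik]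

lemma convex_setOf_posSemidef : Convex ℝ {A : Matrix m m ℂ | A.PosSemidef} :=
  fun _ hA _ hB _ _ ha hb _ => (hA.smul ha).add (hB.smul hb)

end

variable {m : Type*} [Fintype m] [DecidableEq m] {s : Set ℝ} {f : ℝ → ℝ}

section UnitaryConjugation

lemma mul_diagonal_mul_conjTranspose_apply (W : Matrix m m ℂ) (d : m → ℝ) (i k : m) :
    (W * diagonal (fun j => (d j : ℂ)) * Wᴴ) i k = ∑ j, d j * (W i j * star (W k j)) := by
  simp only [mul_apply (M := W * _), mul_diagonal, conjTranspose_apply]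
  exact sum_congr rfl fun j _ => by ring

lemma re_mul_diagonal_mul_conjTranspose_apply_self (W : Matrix m m ℂ) (d : m → ℝ) (i : m) :
    ((W * diagonal (fun j => (d j : ℂ)) * Wᴴ) i i).re = ∑ j, Complex.normSq (W i j) * d j := by
  rw [mul_diagonal_mul_conjTranspose_apply, Complex.re_sum]
  refine sum_congr rfl fun j _ => ?_
  rw [Complex.star_def, Complex.mul_conj, ← Complex.ofReal_mul, Complex.ofReal_re, mul_comm]

variable {W : Matrix m m ℂ} {d : m → ℝ}

lemma sum_normSq_apply_right_of_mem_unitaryGroup (hW : W ∈ unitaryGroup m ℂ) (i : m) :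
    ∑ j, Complex.normSq (W i j) = 1 := by
  have h := congr_fun (congr_fun (mem_unitaryGroup_iff.mp hW) i) i
  simp only [mul_apply, star_apply, Complex.star_def, Complex.mul_conj, one_apply_eq] at h
  exact_mod_cast h

lemma sum_normSq_apply_left_of_mem_unitaryGroup (hW : W ∈ unitaryGroup m ℂ) (j : m) :
    ∑ i, Complex.normSq (W i j) = 1 := by
  simpa using sum_normSq_apply_right_of_mem_unitaryGroup (Unitary.star_mem hW) j

lemma sum_sum_normSq_apply_mul_of_mem_unitaryGroup (hW : W ∈ unitaryGroup m ℂ) (g : m → ℝ) :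
    ∑ i, ∑ j, Complex.normSq (W i j) * g j = ∑ j, g j := by
  rw [sum_comm]
  simp only [← sum_mul, sum_normSq_apply_left_of_mem_unitaryGroup hW, one_mul]

lemma _root_.ConvexOn.map_re_unitary_conj_diagonal_apply_self_le (hf : ConvexOn ℝ s f)
    (hW : W ∈ unitaryGroup m ℂ) (hd : ∀ j, d j ∈ s) (i : m) :
    f ((W * diagonal (fun j => (d j : ℂ)) * Wᴴ) i i).re
      ≤ ∑ j, Complex.normSq (W i j) * f (d j) := by
  rw [re_mul_diagonal_mul_conjTranspose_apply_self]
  exact hf.map_sum_le (fun j _ => Complex.normSq_nonneg _)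
    (sum_normSq_apply_right_of_mem_unitaryGroup hW i) (fun j _ => hd j)

lemma _root_.StrictConvexOn.map_re_unitary_conj_diagonal_apply_self_lt (hf : StrictConvexOn ℝ s f)
    (hW : W ∈ unitaryGroup m ℂ) (hd : ∀ j, d j ∈ s) {i k : m} (hik : i ≠ k)
    (hB : (W * diagonal (fun j => (d j : ℂ)) * Wᴴ) i k ≠ 0) :
    f ((W * diagonal (fun j => (d j : ℂ)) * Wᴴ) i i).re
      < ∑ j, Complex.normSq (W i j) * f (d j) := by
  refine (hf.convexOn.map_re_unitary_conj_diagonal_apply_self_le hW hd i).lt_of_ne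
    fun heq => hB ?_
  set c := ∑ j, Complex.normSq (W i j) * d j
  -- equality in Jensen forces `d` to be constant on the support of the `i`-th row of `W`
  have hconst : ∀ j, W i j ≠ 0 → d j = c := by
    intro j hj
    refine (hf.map_sum_eq_iff' (fun j _ => Complex.normSq_nonneg _)
      (sum_normSq_apply_right_of_mem_unitaryGroup hW i) (fun j _ => hd j)).1 ?_ j (mem_univ j)
      (Complex.normSq_pos.2 hj).ne'
    simpa only [smul_eq_mul, re_mul_diagonal_mul_conjTranspose_apply_self] using heq
  calc (W * diagonal (fun j => (d j : ℂ)) * Wᴴ) i k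
      = ∑ j, (c : ℂ) * (W i j * star (W k j)) := by
        rw [mul_diagonal_mul_conjTranspose_apply]
        refine sum_congr rfl fun j _ => ?_
        rcases eq_or_ne (W i j) 0 with hj | hj
        · simp [hj]
        · rw [hconst j hj]
    _ = c * (W * star W) i k := by simp only [← mul_sum, mul_apply, star_apply]
    _ = 0 := by rw [mem_unitaryGroup_iff.mp hW, one_apply_ne hik, mul_zero]

lemma _root_.ConvexOn.sum_map_re_unitary_conj_diagonal_apply_self_le (hf : ConvexOn ℝ s f)
    (hW : W ∈ unitaryGroup m ℂ) (hd : ∀ j, d j ∈ s) :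
    ∑ i, f ((W * diagonal (fun j => (d j : ℂ)) * Wᴴ) i i).re ≤ ∑ j, f (d j) :=
  calc _ ≤ ∑ i, ∑ j, Complex.normSq (W i j) * f (d j) :=
        sum_le_sum fun i _ => hf.map_re_unitary_conj_diagonal_apply_self_le hW hd i
    _ = ∑ j, f (d j) := sum_sum_normSq_apply_mul_of_mem_unitaryGroup hW _

lemma _root_.StrictConvexOn.sum_map_re_unitary_conj_diagonal_apply_self_lt
    (hf : StrictConvexOn ℝ s f) (hW : W ∈ unitaryGroup m ℂ) (hd : ∀ j, d j ∈ s)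
    (hB : ∃ i k, i ≠ k ∧ (W * diagonal (fun j => (d j : ℂ)) * Wᴴ) i k ≠ 0) :
    ∑ i, f ((W * diagonal (fun j => (d j : ℂ)) * Wᴴ) i i).re < ∑ j, f (d j) := by
  obtain ⟨i, k, hik, hB⟩ := hB
  calc _ < ∑ i, ∑ j, Complex.normSq (W i j) * f (d j) :=
        sum_lt_sum (fun i _ => hf.convexOn.map_re_unitary_conj_diagonal_apply_self_le hW hd i)
          ⟨i, mem_univ i, hf.map_re_unitary_conj_diagonal_apply_self_lt hW hd hik hB⟩
    _ = ∑ j, f (d j) := sum_sum_normSq_apply_mul_of_mem_unitaryGroup hW _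

end UnitaryConjugation

variable {A B U : Matrix m m ℂ}

lemma mpow_of_isHermitian (hA : A.IsHermitian) (r : ℝ) : mpow A r =
    (hA.eigenvectorUnitary : Matrix m m ℂ) * diagonal (fun i => ((hA.eigenvalues i ^ r : ℝ) : ℂ)) *
      (hA.eigenvectorUnitary : Matrix m m ℂ)ᴴ := dif_pos hA

lemma isHermitian_mpow (A : Matrix m m ℂ) (r : ℝ) : (mpow A r).IsHermitian := by
  by_cases hA : A.IsHermitian
  · rw [mpow_of_isHermitian hA]
    exact isHermitian_mul_mul_conjTranspose _ (isHermitian_diagonal_of_self_adjoint _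
      (funext fun i => Complex.conj_ofReal _))
  · rw [mpow, dif_neg hA]
    exact isHermitian_zero

lemma re_trace_mpow (hA : A.IsHermitian) (r : ℝ) :
    (trace (mpow A r)).re = ∑ i, hA.eigenvalues i ^ r := by
  rw [mpow_of_isHermitian hA, trace_mul_cycle, ← star_eq_conjTranspose, Unitary.coe_star_mul_self,
    one_mul, trace_diagonal, Complex.re_sum]
  simp only [Complex.ofReal_re]

lemma PosDef.mpow_mul_mpow_neg {σ : Matrix m m ℂ} (hσ : σ.PosDef) (r : ℝ) :
    mpow σ r * mpow σ (-r) = 1 := by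
  set V : Matrix m m ℂ := (hσ.1.eigenvectorUnitary : Matrix m m ℂ)
  have hVV : Vᴴ * V = 1 := Unitary.coe_star_mul_self hσ.1.eigenvectorUnitary
  have hVV' : V * Vᴴ = 1 := Unitary.coe_mul_star_self hσ.1.eigenvectorUnitary
  have hD : diagonal (fun i => ((hσ.1.eigenvalues i ^ r : ℝ) : ℂ)) *
      diagonal (fun i => ((hσ.1.eigenvalues i ^ (-r) : ℝ) : ℂ)) = 1 := by
    rw [diagonal_mul_diagonal, ← diagonal_one]
    congr 1
    ext i
    rw [← Complex.ofReal_mul, ← Real.rpow_add (hσ.eigenvalues_pos i), add_neg_cancel,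
      Real.rpow_zero, Complex.ofReal_one]
  calc mpow σ r * mpow σ (-r)
      = V * (diagonal (fun i => ((hσ.1.eigenvalues i ^ r : ℝ) : ℂ)) * (Vᴴ * V) *
          diagonal (fun i => ((hσ.1.eigenvalues i ^ (-r) : ℝ) : ℂ))) * Vᴴ := by
        simp only [mpow_of_isHermitian hσ.1, V, Matrix.mul_assoc]
    _ = 1 := by rw [hVV, Matrix.mul_one, hD, Matrix.mul_one, hVV']

lemma PosDef.mpow_mul_mul_mpow_injective {σ : Matrix m m ℂ} (hσ : σ.PosDef) (r : ℝ) :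
    Function.Injective fun H => mpow σ r * H * mpow σ r := by
  intro X Y h
  have hinv : mpow σ (-r) * mpow σ r = 1 := by simpa using hσ.mpow_mul_mpow_neg (-r)
  have hinv' := hσ.mpow_mul_mpow_neg r
  have hX : ∀ X, mpow σ (-r) * (mpow σ r * X * mpow σ r) * mpow σ (-r) = X := fun X => by
    simp only [← Matrix.mul_assoc, hinv, Matrix.one_mul]
    rw [Matrix.mul_assoc, hinv', Matrix.mul_one]
  rw [← hX X, ← hX Y]
  exact congrArg (fun Z => mpow σ (-r) * Z * mpow σ (-r)) h

lemma IsHermitian.conjTranspose_mul_mul_eq (hA : A.IsHermitian) (U : Matrix m m ℂ) :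
    Uᴴ * A * U = (Uᴴ * (hA.eigenvectorUnitary : Matrix m m ℂ)) *
      diagonal (fun j => (hA.eigenvalues j : ℂ)) *
        (Uᴴ * (hA.eigenvectorUnitary : Matrix m m ℂ))ᴴ := by
  conv_lhs => rw [hA.spectral_theorem]
  simp only [Unitary.conjStarAlgAut_apply, conjTranspose_mul, conjTranspose_conjTranspose,
    star_eq_conjTranspose, Matrix.mul_assoc]
  rfl

lemma IsHermitian.conjTranspose_eigenvectorUnitary_mul_mul_self (hA : A.IsHermitian) :
    (hA.eigenvectorUnitary : Matrix m m ℂ)ᴴ * A * hA.eigenvectorUnitary =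
      diagonal (fun j => (hA.eigenvalues j : ℂ)) := by
  have h := hA.conjStarAlgAut_star_eigenvectorUnitary
  simp only [Unitary.conjStarAlgAut_apply, Unitary.coe_star, star_star] at h
  exact h

lemma conjTranspose_mul_mul_injective (hU : U ∈ unitaryGroup m ℂ) :
    Function.Injective fun A : Matrix m m ℂ => Uᴴ * A * U :=
  fun A B h => EquivLike.injective (Unitary.conjStarAlgAut ℂ (Matrix m m ℂ) (star ⟨U, hU⟩)) <| by
    simpa only [Unitary.conjStarAlgAut_apply, Unitary.coe_star, star_star, star_eq_conjTranspose,
      conjTranspose_conjTranspose] using h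

theorem _root_.ConvexOn.sum_map_conj_diag_le_sum_map_eigenvalues (hf : ConvexOn ℝ s f)
    (hA : A.IsHermitian) (hs : ∀ j, hA.eigenvalues j ∈ s) (hU : U ∈ unitaryGroup m ℂ) :
    ∑ i, f ((Uᴴ * A * U) i i).re ≤ ∑ j, f (hA.eigenvalues j) := by
  rw [hA.conjTranspose_mul_mul_eq U]
  exact hf.sum_map_re_unitary_conj_diagonal_apply_self_le
    (mul_mem (Unitary.star_mem hU) hA.eigenvectorUnitary.2) hs

theorem _root_.StrictConvexOn.sum_map_conj_diag_lt_sum_map_eigenvalues (hf : StrictConvexOn ℝ s f)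
    (hA : A.IsHermitian) (hs : ∀ j, hA.eigenvalues j ∈ s) (hU : U ∈ unitaryGroup m ℂ)
    (hoff : ∃ i k, i ≠ k ∧ (Uᴴ * A * U) i k ≠ 0) :
    ∑ i, f ((Uᴴ * A * U) i i).re < ∑ j, f (hA.eigenvalues j) := by
  rw [hA.conjTranspose_mul_mul_eq U] at hoff ⊢
  exact hf.sum_map_re_unitary_conj_diagonal_apply_self_lt
    (mul_mem (Unitary.star_mem hU) hA.eigenvectorUnitary.2) hs hoff

theorem _root_.StrictConvexOn.sum_map_eigenvalues_smul_add_smul_lt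
    (hf : StrictConvexOn ℝ (Set.Ici 0) f) (hA : A.PosSemidef) (hB : B.PosSemidef) (hAB : A ≠ B)
    {a b : ℝ} (ha : 0 < a) (hb : 0 < b) (hab : a + b = 1) (hC : (a • A + b • B).IsHermitian) :
    ∑ i, f (hC.eigenvalues i)
      < a * ∑ i, f (hA.1.eigenvalues i) + b * ∑ i, f (hB.1.eigenvalues i) := by
  set U : Matrix m m ℂ := (hC.eigenvectorUnitary : Matrix m m ℂ)
  have hU : U ∈ unitaryGroup m ℂ := hC.eigenvectorUnitary.2
  set x : m → ℝ := fun i => ((Uᴴ * A * U) i i).re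
  set y : m → ℝ := fun i => ((Uᴴ * B * U) i i).re
  have hx : ∀ i, x i ∈ Set.Ici 0 := fun i =>
    (Complex.nonneg_iff.1 (hA.conjTranspose_mul_mul_same U).diag_nonneg).1
  have hy : ∀ i, y i ∈ Set.Ici 0 := fun i =>
    (Complex.nonneg_iff.1 (hB.conjTranspose_mul_mul_same U).diag_nonneg).1
  have heig : ∀ i, hC.eigenvalues i = a * x i + b * y i := by
    intro i
    have h := congrFun (congrFun hC.conjTranspose_eigenvectorUnitary_mul_mul_self i) i
    simp only [Matrix.mul_add, Matrix.add_mul, mul_smul_comm, smul_mul_assoc, add_apply,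
      smul_apply, diagonal_apply_eq] at h
    simpa [x, y] using congrArg Complex.re h.symm
  have hconj : ∀ i, f (a * x i + b * y i) ≤ a * f (x i) + b * f (y i) := fun i => by
    simpa only [smul_eq_mul] using hf.convexOn.2 (hx i) (hy i) ha.le hb.le hab
  have hsum : ∑ i, (a * f (x i) + b * f (y i)) = a * ∑ i, f (x i) + b * ∑ i, f (y i) := by
    rw [sum_add_distrib, mul_sum, mul_sum]
  have hPA := hf.convexOn.sum_map_conj_diag_le_sum_map_eigenvalues hA.1 hA.eigenvalues_nonneg hU
  have hPB := hf.convexOn.sum_map_conj_diag_le_sum_map_eigenvalues hB.1 hB.eigenvalues_nonneg hU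
  have hPA' := mul_le_mul_of_nonneg_left hPA ha.le
  have hPB' := mul_le_mul_of_nonneg_left hPB hb.le
  have hmix := (sum_le_sum fun i _ => hconj i).trans_eq hsum
  simp only [heig]
  rcases exists_apply_ne_zero_or_re_apply_self_ne (isHermitian_conjTranspose_mul_mul U hA.1)
    (isHermitian_conjTranspose_mul_mul U hB.1) fun h => hAB (conjTranspose_mul_mul_injective hU h)
    with hoffA | hoffB | ⟨i, hi⟩
  · have := hf.sum_map_conj_diag_lt_sum_map_eigenvalues hA.1 hA.eigenvalues_nonneg hU hoffA
    linarith [mul_lt_mul_of_pos_left this ha]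
  · have := hf.sum_map_conj_diag_lt_sum_map_eigenvalues hB.1 hB.eigenvalues_nonneg hU hoffB
    linarith [mul_lt_mul_of_pos_left this hb]
  · have := (sum_lt_sum (fun i _ => hconj i) ⟨i, mem_univ i, by
      simpa only [smul_eq_mul] using hf.2 (hx i) (hy i) hi ha hb hab⟩).trans_eq hsum
    linarith

theorem strictConvexOn_re_trace_mpow {p : ℝ} (hp : 1 < p) :
    StrictConvexOn ℝ {A : Matrix m m ℂ | A.PosSemidef} fun A => (trace (mpow A p)).re := by
  refine ⟨convex_setOf_posSemidef, fun A hA B hB hAB a b ha hb hab => ?_⟩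
  have hC := ((hA.smul ha.le).add (hB.smul hb.le)).1
  simp only [re_trace_mpow hC, re_trace_mpow hA.1, re_trace_mpow hB.1, smul_eq_mul]
  exact (strictConvexOn_rpow hp).sum_map_eigenvalues_smul_add_smul_lt hA hB hAB ha hb hab hC

end Matrix

open Matrix

theorem fAlpha_strictConcave_general {n : ℕ}
    (α : ℝ) (hα : 1 < α)
    (ρ σ : Matrix (Fin n) (Fin n) ℂ) (hσ : σ.PosDef)
    (H₁ H₂ : Matrix (Fin n) (Fin n) ℂ)
    (hH₁ : H₁.PosSemidef) (hH₂ : H₂.PosSemidef) (hne : H₁ ≠ H₂)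
    (l : ℝ) (hl0 : 0 < l) (hl1 : l < 1) :
    l * fAlpha α H₁ ρ σ + (1 - l) * fAlpha α H₂ ρ σ
      < fAlpha α (l • H₁ + (1 - l) • H₂) ρ σ := by
  unfold fAlpha
  set M := mpow σ (-((1 - α) / (2 * α)))
  have hp : 1 < α / (α - 1) := (one_lt_div (by linarith)).2 (by linarith)
  have hM : ∀ H : Matrix (Fin n) (Fin n) ℂ, H.PosSemidef → (M * H * M).PosSemidef := fun H hH => by
    have h := hH.conjTranspose_mul_mul_same M
    rwa [(isHermitian_mpow σ _).eq] at h
  have hconv := (strictConvexOn_re_trace_mpow hp).2 (hM H₁ hH₁) (hM H₂ hH₂)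
    ((hσ.mpow_mul_mul_mpow_injective _).ne hne) hl0 (sub_pos.2 hl1) (add_sub_cancel l 1)
  have hlin : M * (l • H₁ + (1 - l) • H₂) * M = l • (M * H₁ * M) + (1 - l) • (M * H₂ * M) := by
    simp only [Matrix.mul_add, Matrix.add_mul, mul_smul_comm, smul_mul_assoc]
  have htr : (trace (ρ * (l • H₁ + (1 - l) • H₂))).re
      = l * (trace (ρ * H₁)).re + (1 - l) * (trace (ρ * H₂)).re := by
    simp only [Matrix.mul_add, mul_smul_comm, trace_add, trace_smul, Complex.add_re,
      Complex.real_smul, Complex.re_ofReal_mul]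
  simp only [smul_eq_mul] at hconv
  rw [hlin, htr]
  linarith [mul_lt_mul_of_pos_left hconv (sub_pos.2 hα)]

/-- For `α > 1`, fixed positive definite `σ` and density matrix `ρ`, the map
`H ↦ f_α(H,ρ,σ)` is strictly concave on positive semidefinite matrices. -/
theorem fAlpha_strictConcave {n : ℕ}
    (α : ℝ) (hα : 1 < α)
    (ρ σ : Matrix (Fin n) (Fin n) ℂ) (hρ : IsDensity ρ) (hσ : σ.PosDef)
    (H₁ H₂ : Matrix (Fin n) (Fin n) ℂ)
    (hH₁ : H₁.PosSemidef) (hH₂ : H₂.PosSemidef) (hne : H₁ ≠ H₂)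
    (l : ℝ) (hl0 : 0 < l) (hl1 : l < 1) :
    l * fAlpha α H₁ ρ σ + (1 - l) * fAlpha α H₂ ρ σ
      < fAlpha α (l • H₁ + (1 - l) • H₂) ρ σ :=
  fAlpha_strictConcave_general α hα ρ σ hσ H₁ H₂ hH₁ hH₂ hne l hl0 hl1
end
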